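/- arXiv:1610.06613 — 8 statements merged into one kernel-verified Lean document; each statement's English description precedes it below -/
import Mathlib

section
/- Let ρ > 0 and n ∈ ℤ be fixed. For α > 0 define two probability mass functions on ℤ: π_α(k) = e^{-2(α+ρ)} (2(α+ρ))^k / (k! (1 - e^{-2(α+ρ)})) for integers k ≥ 1 and π_α(k) = 0 otherwise (the Poisson distribution with parameter 2(α+ρ) conditioned to be positive), and ψ_α(k) = e^{-2α} (2α)^{k-n} / ((k-n)!) for integers k ≥ n and ψ_α(k) = 0 otherwise (the Poisson distribution with parameter 2α shifted by n). Then the total variation distance between them tends to zero: lim_{α → ∞} ∑_{k ∈ ℤ} |π_α(k) - ψ_α(k)| = 0. -/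
/-!
Write `P_r` for the Poisson(r) mass function on ℤ, `Π` for its version conditioned on
`{k ≥ 1}`, `μ = 2(α+ρ)` and `l = 2α`. By the triangle inequality the ℓ¹ distance is at most
`‖Π - P_μ‖ + ‖P_μ - P_l‖ + ‖P_l - P_l(· - n)‖`.
The first term equals `2e^{-μ}`. Since `P_r(k) - P_r(k-1) = (r - k) P_r(k) / r`, the discrete
derivative of `P_l` has ℓ¹ norm `E|N - l| / l ≤ 1 / √l`, and telescoping bounds the third term
by `|n| / √l`. Finally `P_μ` is the mixture of the shifts `P_l(· - j)` with `j ~ Poisson(2ρ)`, so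
the middle term is at most `E[j] / √l = 2ρ / √l`.
-/

open Filter Real Topology
open scoped Nat

noncomputable def poissonInt (r : ℝ) (k : ℤ) : ℝ :=
  if 0 ≤ k then exp (-r) * r ^ k.toNat / k.toNat ! else 0

noncomputable def zeroTruncPoissonInt (r : ℝ) (k : ℤ) : ℝ :=
  if 1 ≤ k then poissonInt r k / (1 - exp (-r)) else 0

section Shift

variable {G M : Type*} [AddGroup G] [AddCommMonoid M] [TopologicalSpace M] {f : G → M}

lemma hasSum_comp_sub_iff {a : M} (j : G) : HasSum (fun k => f (k - j)) a ↔ HasSum f a :=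
  (Equiv.subRight j).hasSum_iff

lemma Summable.comp_sub (hf : Summable f) (j : G) : Summable fun k => f (k - j) :=
  (Equiv.subRight j).summable_iff.2 hf

variable (f) in
lemma tsum_comp_sub (j : G) : ∑' k, f (k - j) = ∑' k, f k :=
  (Equiv.subRight j).tsum_eq f

end Shift

section L1

lemma tsum_abs_sub_le_tsum_abs_sub_add {ι : Type*} {f g h : ι → ℝ} (hf : Summable f)
    (hg : Summable g) (hh : Summable h) :
    ∑' i, |f i - h i| ≤ ∑' i, |f i - g i| + ∑' i, |g i - h i| := by
  rw [← (hf.sub hg).abs.tsum_add (hg.sub hh).abs]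
  exact Summable.tsum_le_tsum (fun i => abs_sub_le _ _ _) (hf.sub hh).abs
    ((hf.sub hg).abs.add (hg.sub hh).abs)

variable {f : ℤ → ℝ}

lemma tsum_abs_comp_sub_sub_le_two_mul (hf : Summable f) (j : ℤ) :
    ∑' k, |f (k - j) - f k| ≤ 2 * ∑' k, |f k| := by
  have h := tsum_abs_sub_le_tsum_abs_sub_add (hf.comp_sub j) summable_zero hf
  simp only [sub_zero, zero_sub, abs_neg] at h
  rwa [tsum_comp_sub (fun k => |f k|), ← two_mul] at h

lemma tsum_abs_comp_sub_sub_le (hf : Summable f) (j : ℤ) :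
    ∑' k, |f (k - j) - f k| ≤ |(j : ℝ)| * ∑' k, |f k - f (k - 1)| := by
  set D := ∑' k, |f k - f (k - 1)|
  have hnat : ∀ m : ℕ, ∑' k, |f (k - m) - f k| ≤ m * D := by
    intro m
    induction m with
    | zero => simp
    | succ m ih =>
      have h := tsum_abs_sub_le_tsum_abs_sub_add (hf.comp_sub (m + 1)) (hf.comp_sub 1) hf
      have hstep : ∑' k, |f (k - (m + 1)) - f (k - 1)| = ∑' k, |f (k - m) - f k| := by
        rw [← tsum_comp_sub (fun k => |f (k - m) - f k|) 1]
        simp only [sub_sub, add_comm (1 : ℤ)]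
      rw [hstep] at h
      simp_rw [abs_sub_comm (f (_ - 1)) (f _)] at h
      push_cast
      linarith
  rcases le_total 0 j with hj | hj
  · lift j to ℕ using hj
    simpa using hnat j
  · obtain ⟨m, rfl⟩ : ∃ m : ℕ, j = -m := ⟨(-j).toNat, by omega⟩
    calc ∑' k, |f (k - -m) - f k| = ∑' k, |f (k - m) - f k| := by
          rw [← tsum_comp_sub (fun k => |f (k - -m) - f k|) m]
          simp only [sub_neg_eq_add, sub_add_cancel, abs_sub_comm]
      _ ≤ m * D := hnat m
      _ = |((-m : ℤ) : ℝ)| * D := by simp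

lemma tsum_abs_sub_le_of_hasSum_mul_comp_sub {w g : ℤ → ℝ} (hw0 : ∀ j, 0 ≤ w j)
    (hw : HasSum w 1) (hf : Summable f) (hg : ∀ k, HasSum (fun j => w j * f (k - j)) (g k)) :
    ∑' k, |g k - f k| ≤ ∑' j, w j * ∑' k, |f (k - j) - f k| := by
  set F : ℤ → ℤ → ℝ := fun j k => w j * |f (k - j) - f k|
  have hF0 : ∀ j k, 0 ≤ F j k := fun j k => mul_nonneg (hw0 j) (abs_nonneg _)
  have hdiff : ∀ k, HasSum (fun j => w j * (f (k - j) - f k)) (g k - f k) := fun k => by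
    simpa only [mul_sub, one_mul] using (hg k).sub (hw.mul_right (f k))
  have habs : ∀ k j, |w j * (f (k - j) - f k)| = F j k := fun k j => by
    rw [abs_mul, abs_of_nonneg (hw0 j)]
  have hcol : ∀ k, Summable fun j => F j k := fun k => by
    simpa only [habs] using (hdiff k).summable.abs
  have hrow : ∀ j, Summable (F j) := fun j =>
    ((hf.comp_sub j).sub hf).abs.mul_left (w j)
  have hrowsum : Summable fun j => ∑' k, F j k := by
    refine (hw.summable.mul_right (2 * ∑' k, |f k|)).of_nonneg_of_le
      (fun j => tsum_nonneg (hF0 j)) fun j => ?_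
    rw [tsum_mul_left]
    exact mul_le_mul_of_nonneg_left (tsum_abs_comp_sub_sub_le_two_mul hf j) (hw0 j)
  have hF : Summable (Function.uncurry F) :=
    (summable_prod_of_nonneg fun p => hF0 p.1 p.2).2 ⟨hrow, hrowsum⟩
  have hcolsum : Summable fun k => ∑' j, F j k :=
    ((summable_prod_of_nonneg fun p => hF0 p.2 p.1).1 hF.prod_symm).2
  have hpoint : ∀ k, |g k - f k| ≤ ∑' j, F j k := fun k => by
    have h := norm_tsum_le_tsum_norm (hdiff k).summable.norm
    simpa only [Real.norm_eq_abs, habs, (hdiff k).tsum_eq] using h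
  calc ∑' k, |g k - f k| ≤ ∑' k, ∑' j, F j k :=
        Summable.tsum_le_tsum hpoint
          (hcolsum.of_nonneg_of_le (fun k => abs_nonneg _) hpoint) hcolsum
    _ = ∑' j, ∑' k, F j k := hF.tsum_comm' hrow hcol
    _ = ∑' j, w j * ∑' k, |f (k - j) - f k| := tsum_congr fun j => tsum_mul_left

end L1

section Poisson

variable {r : ℝ}

lemma poissonInt_of_neg {k : ℤ} (hk : k < 0) : poissonInt r k = 0 :=
  if_neg (not_le.2 hk)

lemma poissonInt_natCast (r : ℝ) (m : ℕ) : poissonInt r m = exp (-r) * r ^ m / m ! := by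
  simp [poissonInt]

lemma poissonInt_nonneg (hr : 0 ≤ r) (k : ℤ) : 0 ≤ poissonInt r k := by
  unfold poissonInt
  split_ifs <;> positivity

lemma hasSum_poissonInt (r : ℝ) : HasSum (poissonInt r) 1 := by
  have hnat : HasSum (fun m : ℕ => poissonInt r m) 1 := by
    have h := (NormedSpace.expSeries_div_hasSum_exp r).mul_left (exp (-r))
    rw [← exp_eq_exp_ℝ, ← exp_add, neg_add_cancel, exp_zero] at h
    simpa only [poissonInt_natCast, mul_div_assoc] using h
  have hneg : HasSum (fun m : ℕ => poissonInt r (-(m + 1))) 0 := by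
    convert hasSum_zero with m
    exact poissonInt_of_neg (by omega)
  simpa using hnat.of_nat_of_neg_add_one hneg

lemma intCast_mul_poissonInt (r : ℝ) (k : ℤ) :
    (k : ℝ) * poissonInt r k = r * poissonInt r (k - 1) := by
  rcases lt_or_ge k 1 with hk | hk
  · rw [poissonInt_of_neg (by omega : k - 1 < 0), mul_zero]
    obtain rfl | hk0 := eq_or_ne k 0
    · simp
    · rw [poissonInt_of_neg (by omega), mul_zero]
  · lift k to ℕ using (by omega)
    obtain ⟨m, rfl⟩ : ∃ m, k = m + 1 := ⟨k - 1, by omega⟩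
    rw [show ((m + 1 : ℕ) : ℤ) - 1 = m by push_cast; ring, poissonInt_natCast,
      poissonInt_natCast, Nat.factorial_succ, pow_succ]
    push_cast
    field_simp

lemma hasSum_intCast_mul_poissonInt (r : ℝ) :
    HasSum (fun k : ℤ => (k : ℝ) * poissonInt r k) r := by
  simp_rw [intCast_mul_poissonInt]
  simpa using ((hasSum_comp_sub_iff 1).2 (hasSum_poissonInt r)).mul_left r

lemma hasSum_sq_sub_mul_poissonInt (r : ℝ) :
    HasSum (fun k : ℤ => ((k : ℝ) - r) ^ 2 * poissonInt r k) r := by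
  have hfactorial : HasSum (fun k : ℤ => (k : ℝ) * (k - 1) * poissonInt r k) (r ^ 2) := by
    have h := ((hasSum_comp_sub_iff 1).2 (hasSum_intCast_mul_poissonInt r)).mul_left r
    rw [← sq] at h
    convert! h using 2 with k
    rw [mul_right_comm, intCast_mul_poissonInt]
    push_cast
    ring
  convert! (hfactorial.add ((hasSum_intCast_mul_poissonInt r).mul_left (1 - 2 * r))).add
    ((hasSum_poissonInt r).mul_left (r ^ 2)) using 1
  · ext k; ring
  · ring

lemma tsum_abs_sub_mul_poissonInt_le (hr : 0 < r) :
    ∑' k : ℤ, |(k : ℝ) - r| * poissonInt r k ≤ √r := by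
  -- AM-GM bounds the first absolute central moment by the variance.
  have hamgm : ∀ x : ℝ, |x| ≤ (r + x ^ 2) / (2 * √r) := fun x => by
    rw [le_div_iff₀ (by positivity)]
    nlinarith [sq_nonneg (|x| - √r), sq_abs x, sq_sqrt hr.le]
  have hbound :
      HasSum (fun k : ℤ => (r + ((k : ℝ) - r) ^ 2) / (2 * √r) * poissonInt r k) √r := by
    have h := (((hasSum_poissonInt r).mul_left r).add (hasSum_sq_sub_mul_poissonInt r)).div_const
      (2 * √r)
    rw [mul_one, ← two_mul, mul_div_mul_left _ _ two_ne_zero, div_sqrt] at h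
    convert! h using 2 with k
    ring
  have hle : ∀ k : ℤ, |(k : ℝ) - r| * poissonInt r k
      ≤ (r + ((k : ℝ) - r) ^ 2) / (2 * √r) * poissonInt r k :=
    fun k => mul_le_mul_of_nonneg_right (hamgm _) (poissonInt_nonneg hr.le k)
  have hnonneg : ∀ k : ℤ, 0 ≤ |(k : ℝ) - r| * poissonInt r k :=
    fun k => mul_nonneg (abs_nonneg _) (poissonInt_nonneg hr.le k)
  rw [← hbound.tsum_eq]
  exact Summable.tsum_le_tsum hle (hbound.summable.of_nonneg_of_le hnonneg hle) hbound.summable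

lemma poissonInt_sub_poissonInt_sub_one (hr : r ≠ 0) (k : ℤ) :
    poissonInt r k - poissonInt r (k - 1) = (r - k) * poissonInt r k / r := by
  rw [eq_div_iff hr]
  linear_combination intCast_mul_poissonInt r k

lemma tsum_abs_poissonInt_sub_poissonInt_sub_one_le (hr : 0 < r) :
    ∑' k : ℤ, |poissonInt r k - poissonInt r (k - 1)| ≤ (√r)⁻¹ := by
  have h : ∀ k : ℤ,
      |poissonInt r k - poissonInt r (k - 1)| = |(k : ℝ) - r| * poissonInt r k / r := by
    intro k
    rw [poissonInt_sub_poissonInt_sub_one hr.ne', abs_div, abs_mul, abs_of_pos hr,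
      abs_of_nonneg (poissonInt_nonneg hr.le k), abs_sub_comm]
  simp_rw [h]
  rw [tsum_div_const]
  calc (∑' k : ℤ, |(k : ℝ) - r| * poissonInt r k) / r ≤ √r / r := by
        gcongr
        exact tsum_abs_sub_mul_poissonInt_le hr
    _ = (√r)⁻¹ := by rw [sqrt_div_self', one_div]

end Poisson

section PoissonDistance

lemma sum_range_poissonInt_mul_poissonInt (a b : ℝ) (m : ℕ) :
    ∑ j ∈ Finset.range (m + 1), poissonInt a j * poissonInt b (m - j : ℕ)
      = poissonInt (a + b) m := by
  simp only [poissonInt_natCast]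
  rw [add_pow, neg_add, exp_add, Finset.mul_sum, Finset.sum_div]
  refine Finset.sum_congr rfl fun j hj => ?_
  have hjm : j ≤ m := Nat.lt_succ_iff.mp (Finset.mem_range.mp hj)
  have hchoose : (m.choose j : ℝ) * j ! * (m - j)! = m ! := by
    exact_mod_cast Nat.choose_mul_factorial_mul_factorial hjm
  field_simp
  linear_combination (-(a ^ j * b ^ (m - j))) * hchoose

lemma hasSum_poissonInt_mul_poissonInt_sub (a b : ℝ) (k : ℤ) :
    HasSum (fun j => poissonInt a j * poissonInt b (k - j)) (poissonInt (a + b) k) := by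
  rcases lt_or_ge k 0 with hk | hk
  · rw [poissonInt_of_neg hk]
    convert hasSum_zero with j
    rcases lt_or_ge j 0 with hj | hj
    · rw [poissonInt_of_neg hj, zero_mul]
    · rw [poissonInt_of_neg (by omega : k - j < 0), mul_zero]
  lift k to ℕ using hk
  have hsupp : ∀ j ∉ (Finset.range (k + 1)).map Nat.castEmbedding,
      poissonInt a j * poissonInt b (k - j) = 0 := by
    intro j hj
    rcases lt_or_ge j 0 with hj0 | hj0
    · rw [poissonInt_of_neg hj0, zero_mul]
    · lift j to ℕ using hj0
      simp only [Finset.mem_map, Finset.mem_range, Nat.castEmbedding_apply, Nat.cast_inj,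
        exists_eq_right, not_lt] at hj
      rw [poissonInt_of_neg (show (k : ℤ) - j < 0 by omega), mul_zero]
  have hsum : poissonInt (a + b) k = ∑ j ∈ (Finset.range (k + 1)).map Nat.castEmbedding,
      poissonInt a j * poissonInt b (k - j) := by
    rw [Finset.sum_map, ← sum_range_poissonInt_mul_poissonInt]
    refine Finset.sum_congr rfl fun j hj => ?_
    have hjk : j ≤ k := Nat.lt_succ_iff.mp (Finset.mem_range.mp hj)
    simp [Nat.cast_sub hjk]
  rw [hsum]
  exact hasSum_sum_of_ne_finset_zero hsupp

lemma tsum_abs_poissonInt_add_sub_le {c l : ℝ} (hc : 0 ≤ c) (hl : 0 < l) :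
    ∑' k, |poissonInt (c + l) k - poissonInt l k| ≤ c / √l := by
  have hshift : ∀ j : ℤ,
      ∑' k, |poissonInt l (k - j) - poissonInt l k| ≤ |(j : ℝ)| * (√l)⁻¹ :=
    fun j => (tsum_abs_comp_sub_sub_le (hasSum_poissonInt l).summable j).trans <| by
      gcongr
      exact tsum_abs_poissonInt_sub_poissonInt_sub_one_le hl
  have hmean : HasSum (fun j : ℤ => poissonInt c j * (|(j : ℝ)| * (√l)⁻¹)) (c / √l) := by
    rw [div_eq_mul_inv]
    convert! (hasSum_intCast_mul_poissonInt c).mul_right (√l)⁻¹ using 2 with j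
    rcases lt_or_ge j 0 with hj | hj
    · simp [poissonInt_of_neg hj]
    · rw [abs_of_nonneg (by exact_mod_cast hj)]
      ring
  have hle : ∀ j, poissonInt c j * ∑' k, |poissonInt l (k - j) - poissonInt l k|
      ≤ poissonInt c j * (|(j : ℝ)| * (√l)⁻¹) :=
    fun j => mul_le_mul_of_nonneg_left (hshift j) (poissonInt_nonneg hc j)
  calc ∑' k, |poissonInt (c + l) k - poissonInt l k|
      ≤ ∑' j, poissonInt c j * ∑' k, |poissonInt l (k - j) - poissonInt l k| :=
        tsum_abs_sub_le_of_hasSum_mul_comp_sub (poissonInt_nonneg hc) (hasSum_poissonInt c)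
          (hasSum_poissonInt l).summable (hasSum_poissonInt_mul_poissonInt_sub c l)
    _ ≤ c / √l := by
        rw [← hmean.tsum_eq]
        refine Summable.tsum_le_tsum hle (hmean.summable.of_nonneg_of_le (fun j => ?_) hle)
          hmean.summable
        exact mul_nonneg (poissonInt_nonneg hc j) (tsum_nonneg fun k => abs_nonneg _)

end PoissonDistance

section ZeroTruncatedPoisson

variable {r : ℝ}

lemma poissonInt_zero (r : ℝ) : poissonInt r 0 = exp (-r) := by
  simp [poissonInt]

lemma zeroTruncPoissonInt_eq (r : ℝ) (k : ℤ) :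
    zeroTruncPoissonInt r k
      = (poissonInt r k - if k = 0 then exp (-r) else 0) / (1 - exp (-r)) := by
  unfold zeroTruncPoissonInt
  rcases lt_trichotomy k 0 with hk | rfl | hk
  · rw [if_neg (by omega), if_neg (by omega), poissonInt_of_neg hk, sub_zero, zero_div]
  · simp [poissonInt_zero]
  · rw [if_pos (by omega), if_neg (by omega), sub_zero]

lemma hasSum_zeroTruncPoissonInt (hr : r ≠ 0) : HasSum (zeroTruncPoissonInt r) 1 := by
  have hZ : 1 - exp (-r) ≠ 0 := by
    rw [sub_ne_zero, ne_comm, Ne, exp_eq_one_iff, neg_eq_zero]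
    exact hr
  have h := ((hasSum_poissonInt r).sub (hasSum_ite_eq 0 (exp (-r)))).div_const (1 - exp (-r))
  rw [div_self hZ] at h
  simpa only [← zeroTruncPoissonInt_eq] using h

lemma abs_zeroTruncPoissonInt_sub_poissonInt (hr : 0 < r) (k : ℤ) :
    |zeroTruncPoissonInt r k - poissonInt r k|
      = exp (-r) * zeroTruncPoissonInt r k + if k = 0 then exp (-r) else 0 := by
  have hZ : 0 < 1 - exp (-r) := by
    rw [sub_pos, exp_lt_one_iff, neg_lt_zero]
    exact hr
  unfold zeroTruncPoissonInt
  rcases lt_trichotomy k 0 with hk | rfl | hk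
  · simp [poissonInt_of_neg hk, hk.ne]
  · simp [poissonInt_zero]
  · have hsub : poissonInt r k / (1 - exp (-r)) - poissonInt r k
        = exp (-r) * (poissonInt r k / (1 - exp (-r))) := by
      field_simp
      ring
    rw [if_pos (by omega), if_neg (by omega), add_zero, hsub,
      abs_of_nonneg (by have := poissonInt_nonneg hr.le k; positivity)]

lemma tsum_abs_zeroTruncPoissonInt_sub_poissonInt (hr : 0 < r) :
    ∑' k, |zeroTruncPoissonInt r k - poissonInt r k| = 2 * exp (-r) := by
  simp_rw [abs_zeroTruncPoissonInt_sub_poissonInt hr]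
  rw [(((hasSum_zeroTruncPoissonInt hr.ne').mul_left (exp (-r))).add
    (hasSum_ite_eq 0 (exp (-r)))).tsum_eq]
  ring

end ZeroTruncatedPoisson

lemma tsum_abs_zeroTruncPoissonInt_sub_poissonInt_comp_sub_le {c l : ℝ} (hc : 0 ≤ c)
    (hl : 0 < l) (n : ℤ) :
    ∑' k, |zeroTruncPoissonInt (c + l) k - poissonInt l (k - n)|
      ≤ 2 * exp (-(c + l)) + (c + |(n : ℝ)|) * (√l)⁻¹ := by
  have hμ : 0 < c + l := by positivity
  have hP := (hasSum_poissonInt l).summable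
  have hPμ := (hasSum_poissonInt (c + l)).summable
  have hconditioning := tsum_abs_zeroTruncPoissonInt_sub_poissonInt hμ
  have hparameter := tsum_abs_poissonInt_add_sub_le hc hl
  have hshift : ∑' k, |poissonInt l k - poissonInt l (k - n)| ≤ |(n : ℝ)| * (√l)⁻¹ := by
    rw [tsum_congr fun k => abs_sub_comm _ _]
    exact (tsum_abs_comp_sub_sub_le hP n).trans
      (by gcongr; exact tsum_abs_poissonInt_sub_poissonInt_sub_one_le hl)
  have htri₁ := tsum_abs_sub_le_tsum_abs_sub_add (hasSum_zeroTruncPoissonInt hμ.ne').summable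
    hPμ (hP.comp_sub n)
  have htri₂ := tsum_abs_sub_le_tsum_abs_sub_add hPμ hP (hP.comp_sub n)
  rw [div_eq_mul_inv] at hparameter
  linarith

/-- Total variation distance between the Poisson(2(α+ρ)) distribution conditioned to
be positive and the Poisson(2α) distribution shifted by `n` tends to zero as `α → ∞`. -/
theorem stmt_0 (ρ : ℝ) (hρ : 0 < ρ) (n : ℤ) :
    Tendsto (fun α : ℝ =>
      ∑' k : ℤ,
        |(if 1 ≤ k then
            Real.exp (-(2 * (α + ρ))) * (2 * (α + ρ)) ^ k.toNat /
              ((Nat.factorial k.toNat : ℝ) * (1 - Real.exp (-(2 * (α + ρ)))))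
          else 0)
          - (if n ≤ k then
            Real.exp (-(2 * α)) * (2 * α) ^ (k - n).toNat /
              (Nat.factorial (k - n).toNat : ℝ)
          else 0)|)
      atTop (nhds 0) := by
  have hsummand : ∀ (α : ℝ) (k : ℤ),
      (if 1 ≤ k then
          Real.exp (-(2 * (α + ρ))) * (2 * (α + ρ)) ^ k.toNat /
            ((Nat.factorial k.toNat : ℝ) * (1 - Real.exp (-(2 * (α + ρ)))))
        else 0)
        - (if n ≤ k then
          Real.exp (-(2 * α)) * (2 * α) ^ (k - n).toNat / (Nat.factorial (k - n).toNat : ℝ)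
        else 0)
      = zeroTruncPoissonInt (2 * ρ + 2 * α) k - poissonInt (2 * α) (k - n) := by
    intro α k
    rw [show 2 * ρ + 2 * α = 2 * (α + ρ) by ring]
    simp only [zeroTruncPoissonInt, poissonInt, sub_nonneg]
    split_ifs <;> first | omega | rw [div_div] | rfl
  have hbound : ∀ᶠ α in atTop, ∑' k : ℤ, |zeroTruncPoissonInt (2 * ρ + 2 * α) k -
      poissonInt (2 * α) (k - n)|
        ≤ 2 * exp (-(2 * ρ + 2 * α)) + (2 * ρ + |(n : ℝ)|) * (√(2 * α))⁻¹ :=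
    (eventually_gt_atTop 0).mono fun α hα =>
      tsum_abs_zeroTruncPoissonInt_sub_poissonInt_comp_sub_le (by positivity) (by positivity) n
  have hexp : Tendsto (fun α : ℝ => exp (-(2 * ρ + 2 * α))) atTop (𝓝 0) :=
    tendsto_exp_neg_atTop_nhds_zero.comp
      (tendsto_atTop_add_const_left _ _ (tendsto_id.const_mul_atTop two_pos))
  have hsqrt : Tendsto (fun α : ℝ => (√(2 * α))⁻¹) atTop (𝓝 0) :=
    tendsto_inv_atTop_zero.comp (tendsto_sqrt_atTop.comp (tendsto_id.const_mul_atTop two_pos))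
  simp_rw [hsummand]
  refine squeeze_zero' (Eventually.of_forall fun α => tsum_nonneg fun k => abs_nonneg _) hbound ?_
  simpa using (hexp.const_mul 2).add (hsqrt.const_mul (2 * ρ + |(n : ℝ)|))
end

section
/- For α > 0, consider the Poisson(2α) probability weights p_α(k) = e^{-2α}(2α)^k/k! on ℕ. Then lim_{α → ∞} ( p_α(0) + ∑_{k=1}^∞ | p_α(k) - e^{-2α}(2α)^{k-1}/(k-1)! | ) = 0; that is, the total variation distance between a Poisson(2α) distribution and the same distribution shifted by one tends to 0 as α → ∞. -/
open Filter


lemma tsum_exp (x : ℝ) : ∑' k : ℕ, x ^ k / (Nat.factorial k : ℝ) = Real.exp x := by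
  rw [Real.exp_eq_exp_ℝ, NormedSpace.exp_eq_tsum_div]

lemma sum_f0 (x : ℝ) : Summable (fun k : ℕ => x ^ k / (Nat.factorial k : ℝ)) :=
  Real.summable_pow_div_factorial x

lemma f1_succ (x : ℝ) (k : ℕ) :
    ((k : ℝ) + 1) * x ^ (k+1) / (Nat.factorial (k+1) : ℝ)
      = x * (x ^ k / (Nat.factorial k : ℝ)) := by
  have h : ((Nat.factorial (k+1) : ℕ) : ℝ) = ((k:ℝ)+1) * (Nat.factorial k : ℝ) := by
    push_cast [Nat.factorial_succ]; ring
  have hk : ((Nat.factorial k : ℕ) : ℝ) ≠ 0 := Nat.cast_ne_zero.mpr (Nat.factorial_ne_zero k)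
  rw [h]
  field_simp
  ring

lemma sum_f1 (x : ℝ) : Summable (fun k : ℕ => (k : ℝ) * x ^ k / (Nat.factorial k : ℝ)) := by
  rw [← summable_nat_add_iff 1]
  have : (fun k : ℕ => ((k+1 : ℕ) : ℝ) * x ^ (k+1) / (Nat.factorial (k+1) : ℝ))
      = fun k : ℕ => x * (x ^ k / (Nat.factorial k : ℝ)) := by
    funext k; push_cast; exact f1_succ x k
  rw [this]
  exact (sum_f0 x).mul_left x

lemma tsum_f1 (x : ℝ) :
    ∑' k : ℕ, (k : ℝ) * x ^ k / (Nat.factorial k : ℝ) = x * Real.exp x := by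
  rw [Summable.tsum_eq_zero_add (sum_f1 x)]
  have : (fun k : ℕ => ((k+1 : ℕ) : ℝ) * x ^ (k+1) / (Nat.factorial (k+1) : ℝ))
      = fun k : ℕ => x * (x ^ k / (Nat.factorial k : ℝ)) := by
    funext k; push_cast; exact f1_succ x k
  rw [show (∑' k : ℕ, ((k+1 : ℕ) : ℝ) * x ^ (k+1) / (Nat.factorial (k+1) : ℝ))
      = ∑' k : ℕ, x * (x ^ k / (Nat.factorial k : ℝ)) from by rw [this]]
  rw [tsum_mul_left, tsum_exp]
  simp

lemma f2_succ (x : ℝ) (k : ℕ) :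
    (((k:ℝ)+2)) * (((k:ℝ)+2) - 1) * x ^ (k+2) / (Nat.factorial (k+2) : ℝ)
      = x^2 * (x ^ k / (Nat.factorial k : ℝ)) := by
  have h : ((Nat.factorial (k+2) : ℕ) : ℝ)
      = ((k:ℝ)+2) * (((k:ℝ)+1) * (Nat.factorial k : ℝ)) := by
    push_cast [Nat.factorial_succ]; ring
  have hk : ((Nat.factorial k : ℕ) : ℝ) ≠ 0 := Nat.cast_ne_zero.mpr (Nat.factorial_ne_zero k)
  rw [h]
  field_simp
  ring

lemma f2_succ' (x : ℝ) :
    (fun k : ℕ => ((k+2 : ℕ) : ℝ) * (((k+2 : ℕ):ℝ) - 1) * x ^ (k+2) / (Nat.factorial (k+2) : ℝ))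
      = fun k : ℕ => x^2 * (x ^ k / (Nat.factorial k : ℝ)) := by
  funext k; push_cast; exact f2_succ x k

lemma sum_f2 (x : ℝ) :
    Summable (fun k : ℕ => (k : ℝ) * ((k:ℝ) - 1) * x ^ k / (Nat.factorial k : ℝ)) := by
  rw [← summable_nat_add_iff 2]
  have := f2_succ' x
  push_cast at this ⊢
  rw [this]
  exact (sum_f0 x).mul_left (x^2)

lemma tsum_f2 (x : ℝ) :
    ∑' k : ℕ, (k : ℝ) * ((k:ℝ) - 1) * x ^ k / (Nat.factorial k : ℝ) = x^2 * Real.exp x := by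
  rw [Summable.tsum_eq_zero_add (sum_f2 x), Summable.tsum_eq_zero_add ((summable_nat_add_iff 1).mpr (sum_f2 x))]
  have h2 : (∑' k : ℕ, ((k:ℝ)+1+1) * ((k:ℝ)+1+1 - 1) * x ^ (k+1+1) / (Nat.factorial (k+1+1) : ℝ))
      = ∑' k : ℕ, x^2 * (x ^ k / (Nat.factorial k : ℝ)) := by
    congr 1
    funext k
    have := f2_succ x k
    convert this using 2 <;> push_cast <;> ring
  push_cast
  rw [h2, tsum_mul_left, tsum_exp]
  simp

lemma g_eq (x : ℝ) (k : ℕ) :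
    ((k:ℝ) - x)^2 * x ^ k / (Nat.factorial k : ℝ)
      = (k : ℝ) * ((k:ℝ) - 1) * x ^ k / (Nat.factorial k : ℝ)
        + (1 - 2*x) * ((k : ℝ) * x ^ k / (Nat.factorial k : ℝ))
        + x^2 * (x ^ k / (Nat.factorial k : ℝ)) := by
  have hk : ((Nat.factorial k : ℕ) : ℝ) ≠ 0 := Nat.cast_ne_zero.mpr (Nat.factorial_ne_zero k)
  field_simp
  ring

lemma sum_g (x : ℝ) :
    Summable (fun k : ℕ => ((k:ℝ) - x)^2 * x ^ k / (Nat.factorial k : ℝ)) := by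
  simp only [g_eq x]
  exact ((sum_f2 x).add ((sum_f1 x).mul_left _)).add ((sum_f0 x).mul_left _)

lemma tsum_g (x : ℝ) :
    ∑' k : ℕ, ((k:ℝ) - x)^2 * x ^ k / (Nat.factorial k : ℝ) = x * Real.exp x := by
  simp only [g_eq x]
  rw [Summable.tsum_add ((sum_f2 x).add ((sum_f1 x).mul_left _)) ((sum_f0 x).mul_left _),
    Summable.tsum_add (sum_f2 x) ((sum_f1 x).mul_left _), tsum_mul_left, tsum_mul_left,
    tsum_f2, tsum_f1, tsum_exp]
  ring

set_option maxHeartbeats 2000000 in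
lemma main_bound (x : ℝ) (hx : 0 < x) :
    Real.exp (-x) * x ^ (0:ℕ) / (Nat.factorial 0 : ℝ)
      + ∑' k : ℕ, |Real.exp (-x) * x ^ (k+1) / (Nat.factorial (k+1) : ℝ)
          - Real.exp (-x) * x ^ k / (Nat.factorial k : ℝ)|
      ≤ Real.exp (-x) + 1 / Real.sqrt x := by
  set s := Real.sqrt x with hs_def
  have hs : 0 < s := Real.sqrt_pos.mpr hx
  have hs2 : s ^ 2 = x := Real.sq_sqrt hx.le
  set B : ℕ → ℝ := fun k =>
    Real.exp (-x) / (2*x*s) *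
      ((((k+1:ℕ):ℝ) - x)^2 * x^(k+1) / (Nat.factorial (k+1) : ℝ)
        + x * (x^(k+1) / (Nat.factorial (k+1) : ℝ))) with hB_def
  have sg1 : Summable (fun k : ℕ => (((k+1:ℕ):ℝ) - x)^2 * x^(k+1) / (Nat.factorial (k+1) : ℝ)) :=
    (summable_nat_add_iff 1).mpr (sum_g x)
  have sf01 : Summable (fun k : ℕ => x^(k+1) / (Nat.factorial (k+1) : ℝ)) :=
    (summable_nat_add_iff 1).mpr (sum_f0 x)
  have sumB : Summable B := ((sg1.add (sf01.mul_left x)).mul_left _)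
  -- pointwise bound
  have hpt : ∀ k : ℕ, |Real.exp (-x) * x ^ (k+1) / (Nat.factorial (k+1) : ℝ)
      - Real.exp (-x) * x ^ k / (Nat.factorial k : ℝ)| ≤ B k := by
    intro k
    have hfact : ((Nat.factorial (k+1) : ℕ) : ℝ) = ((k:ℝ)+1) * (Nat.factorial k : ℝ) := by
      push_cast [Nat.factorial_succ]; ring
    have hk : ((Nat.factorial k : ℕ) : ℝ) ≠ 0 := Nat.cast_ne_zero.mpr (Nat.factorial_ne_zero k)
    have hk1 : ((k:ℝ)+1) ≠ 0 := by positivity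
    have heq : Real.exp (-x) * x ^ (k+1) / (Nat.factorial (k+1) : ℝ)
        - Real.exp (-x) * x ^ k / (Nat.factorial k : ℝ)
        = (Real.exp (-x) * (x^k / (Nat.factorial (k+1) : ℝ))) * (x - ((k:ℝ)+1)) := by
      rw [hfact]; field_simp; ring
    rw [heq, abs_mul]
    have hc : 0 ≤ Real.exp (-x) * (x^k / (Nat.factorial (k+1) : ℝ)) := by positivity
    rw [abs_of_nonneg hc]
    have habs : |x - ((k:ℝ)+1)| ≤ ((((k:ℝ)+1) - x)^2 + x) / (2*s) := by
      rw [abs_sub_comm, le_div_iff₀ (by positivity : (0:ℝ) < 2*s)]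
      nlinarith [sq_nonneg (|((k:ℝ)+1) - x| - s), sq_abs (((k:ℝ)+1) - x),
        abs_nonneg (((k:ℝ)+1) - x)]
    calc Real.exp (-x) * (x^k / (Nat.factorial (k+1) : ℝ)) * |x - ((k:ℝ)+1)|
        ≤ Real.exp (-x) * (x^k / (Nat.factorial (k+1) : ℝ)) * (((((k:ℝ)+1) - x)^2 + x) / (2*s)) :=
          mul_le_mul_of_nonneg_left habs hc
      _ = B k := by
          rw [hB_def]
          have hxne : x ≠ 0 := hx.ne'
          have hfne : ((Nat.factorial (k+1) : ℕ) : ℝ) ≠ 0 :=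
            Nat.cast_ne_zero.mpr (Nat.factorial_ne_zero _)
          push_cast
          field_simp
          ring
  have sumT : Summable (fun k : ℕ => |Real.exp (-x) * x ^ (k+1) / (Nat.factorial (k+1) : ℝ)
      - Real.exp (-x) * x ^ k / (Nat.factorial k : ℝ)|) :=
    Summable.of_nonneg_of_le (fun k => abs_nonneg _) hpt sumB
  have hT : (∑' k : ℕ, |Real.exp (-x) * x ^ (k+1) / (Nat.factorial (k+1) : ℝ)
      - Real.exp (-x) * x ^ k / (Nat.factorial k : ℝ)|) ≤ ∑' k, B k :=
    Summable.tsum_le_tsum hpt sumT sumB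
  -- bound tsum B
  have hg1 : (∑' k : ℕ, (((k+1:ℕ):ℝ) - x)^2 * x^(k+1) / (Nat.factorial (k+1) : ℝ))
      ≤ x * Real.exp x := by
    have h0 := Summable.tsum_eq_zero_add (sum_g x)
    rw [tsum_g x] at h0
    have h00 : (0:ℝ) ≤ (((0:ℕ):ℝ) - x)^2 * x^0 / (Nat.factorial 0 : ℝ) := by positivity
    push_cast at h0 ⊢
    linarith
  have hf1 : (∑' k : ℕ, x^(k+1) / (Nat.factorial (k+1) : ℝ)) ≤ Real.exp x := by
    have h0 := Summable.tsum_eq_zero_add (sum_f0 x)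
    rw [tsum_exp x] at h0
    have h00 : (0:ℝ) ≤ x^0 / (Nat.factorial 0 : ℝ) := by positivity
    linarith
  have hBsum : (∑' k, B k) ≤ 1 / s := by
    rw [hB_def, tsum_mul_left, Summable.tsum_add sg1 (sf01.mul_left x), tsum_mul_left]
    have hc0 : 0 ≤ Real.exp (-x) / (2*x*s) := by positivity
    have : (∑' k : ℕ, (((k+1:ℕ):ℝ) - x)^2 * x^(k+1) / (Nat.factorial (k+1) : ℝ))
        + x * (∑' k : ℕ, x^(k+1) / (Nat.factorial (k+1) : ℝ)) ≤ 2 * (x * Real.exp x) := by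
      nlinarith [hg1, hf1, hx]
    calc Real.exp (-x) / (2*x*s) * _ ≤ Real.exp (-x) / (2*x*s) * (2 * (x * Real.exp x)) :=
          mul_le_mul_of_nonneg_left this hc0
      _ = 1 / s := by
          rw [Real.exp_neg]
          field_simp
  have h0 : Real.exp (-x) * x ^ (0:ℕ) / (Nat.factorial 0 : ℝ) = Real.exp (-x) := by simp
  rw [h0]
  linarith

/-- The total variation distance between a Poisson(2α) distribution and the same
distribution shifted by one tends to 0 as α → ∞ :
`p_α(0) + ∑_{k=1}^∞ |p_α(k) - e^{-2α}(2α)^{k-1}/(k-1)!| → 0`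
(the sum over `k ≥ 1` is reindexed as a sum over `k ∈ ℕ` via `k+1`). -/
theorem stmt_1 :
    Tendsto (fun α : ℝ =>
      Real.exp (-(2 * α)) * (2 * α) ^ (0 : ℕ) / (Nat.factorial 0 : ℝ)
        + ∑' k : ℕ,
            |Real.exp (-(2 * α)) * (2 * α) ^ (k + 1) / (Nat.factorial (k + 1) : ℝ)
              - Real.exp (-(2 * α)) * (2 * α) ^ k / (Nat.factorial k : ℝ)|)
      atTop (nhds 0) := by
  have h2a : Tendsto (fun α : ℝ => 2 * α) atTop atTop :=
    (tendsto_id (α := ℝ)).const_mul_atTop two_pos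
  have hexp : Tendsto (fun α : ℝ => Real.exp (-(2 * α))) atTop (nhds 0) :=
    Real.tendsto_exp_atBot.comp (tendsto_neg_atTop_atBot.comp h2a)
  have hsqrt : Tendsto (fun α : ℝ => 1 / Real.sqrt (2 * α)) atTop (nhds 0) := by
    have hsq : Tendsto Real.sqrt atTop atTop := by
      apply tendsto_atTop_atTop.mpr
      intro b
      refine ⟨b^2, fun a ha => ?_⟩
      calc b ≤ |b| := le_abs_self b
        _ = Real.sqrt (b^2) := (Real.sqrt_sq_eq_abs b).symm
        _ ≤ Real.sqrt a := Real.sqrt_le_sqrt ha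
    simp only [one_div]
    exact (hsq.comp h2a).inv_tendsto_atTop
  have hg : Tendsto (fun α : ℝ => Real.exp (-(2 * α)) + 1 / Real.sqrt (2 * α)) atTop (nhds 0) := by
    simpa using hexp.add hsqrt
  refine tendsto_of_tendsto_of_tendsto_of_le_of_le' tendsto_const_nhds hg ?_ ?_
  · filter_upwards [eventually_ge_atTop (0:ℝ)] with α hα
    have h1 : (0:ℝ) ≤ Real.exp (-(2 * α)) * (2 * α) ^ (0 : ℕ) / (Nat.factorial 0 : ℝ) := by
      positivity
    have h2 : (0:ℝ) ≤ ∑' k : ℕ,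
        |Real.exp (-(2 * α)) * (2 * α) ^ (k + 1) / (Nat.factorial (k + 1) : ℝ)
          - Real.exp (-(2 * α)) * (2 * α) ^ k / (Nat.factorial k : ℝ)| :=
      tsum_nonneg fun k => abs_nonneg _
    linarith
  · filter_upwards [eventually_gt_atTop (0:ℝ)] with α hα
    exact main_bound (2 * α) (by linarith)
end

section
/- For all α > 0 and ρ > 0, ∑_{k=0}^∞ e^{-2α} (2α)^k / k! · (1 - e^{-2ρ} (1 + ρ/α)^k)² = e^{2ρ²/α} - 1. In particular, for fixed ρ > 0 this quantity tends to 0 as α → ∞. -/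
open Filter Real Nat

/-! For `X ~ Poisson(a)` the generating function is `E[c^X] = exp(a(c - 1))`. Expanding the
square, `E[(1 - b c^X)²] = 1 - 2b E[c^X] + b² E[(c²)^X]`; with `a = 2α`, `b = e^{-2ρ}`,
`c = 1 + ρ/α` the exponents become `2ρ` and `4ρ + 2ρ²/α`, and everything cancels except
`e^{2ρ²/α} - 1`. -/

theorem hasSum_poisson_mul_pow (a c : ℝ) :
    HasSum (fun k : ℕ => exp (-a) * a ^ k / k ! * c ^ k) (exp (a * (c - 1))) := by
  have h := (NormedSpace.expSeries_div_hasSum_exp (a * c)).mul_left (exp (-a))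
  rw [← exp_eq_exp_ℝ, ← exp_add, show -a + a * c = a * (c - 1) by ring] at h
  exact h.congr_fun fun k => by rw [mul_pow]; ring

theorem hasSum_poisson_mul_one_sub_mul_pow_sq (a b c : ℝ) :
    HasSum (fun k : ℕ => exp (-a) * a ^ k / k ! * (1 - b * c ^ k) ^ 2)
      (1 - 2 * b * exp (a * (c - 1)) + b ^ 2 * exp (a * (c ^ 2 - 1))) := by
  have h0 := hasSum_poisson_mul_pow a 1
  have h1 := (hasSum_poisson_mul_pow a c).mul_left (2 * b)
  have h2 := (hasSum_poisson_mul_pow a (c ^ 2)).mul_left (b ^ 2)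
  rw [sub_self, mul_zero, exp_zero] at h0
  refine ((h0.sub h1).add h2).congr_fun fun k => ?_
  rw [← pow_mul, mul_comm 2 k, pow_mul]
  ring

theorem tsum_poisson_mul_one_sub_mul_pow_sq (ρ α : ℝ) (hα : α ≠ 0) :
    ∑' k : ℕ, exp (-(2 * α)) * (2 * α) ^ k / (k ! : ℝ) * (1 - exp (-(2 * ρ)) * (1 + ρ / α) ^ k) ^ 2
      = exp (2 * ρ ^ 2 / α) - 1 := by
  rw [(hasSum_poisson_mul_one_sub_mul_pow_sq _ _ _).tsum_eq]
  have hc : 2 * α * (1 + ρ / α - 1) = 2 * ρ := by field_simp; ring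
  have hc_sq : 2 * α * ((1 + ρ / α) ^ 2 - 1) = 2 * ρ + 2 * ρ + 2 * ρ ^ 2 / α := by
    field_simp; ring
  have hinv : exp (-(2 * ρ)) * exp (2 * ρ) = 1 := by rw [← exp_add, neg_add_cancel, exp_zero]
  rw [hc, hc_sq, exp_add, exp_add]
  linear_combination
    (exp (-(2 * ρ)) * exp (2 * ρ) * exp (2 * ρ ^ 2 / α) + exp (2 * ρ ^ 2 / α) - 2) * hinv

theorem stmt_3_general (ρ : ℝ) :
    (∀ α : ℝ, 0 < α →
      (∑' k : ℕ, Real.exp (-(2 * α)) * (2 * α) ^ k / (Nat.factorial k : ℝ)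
        * (1 - Real.exp (-(2 * ρ)) * (1 + ρ / α) ^ k) ^ 2)
      = Real.exp (2 * ρ ^ 2 / α) - 1)
    ∧ Tendsto (fun α : ℝ =>
        ∑' k : ℕ, Real.exp (-(2 * α)) * (2 * α) ^ k / (Nat.factorial k : ℝ)
          * (1 - Real.exp (-(2 * ρ)) * (1 + ρ / α) ^ k) ^ 2)
      atTop (nhds 0) := by
  refine ⟨fun α hα => tsum_poisson_mul_one_sub_mul_pow_sq ρ α hα.ne', ?_⟩
  have hlim : Tendsto (fun α : ℝ => exp (2 * ρ ^ 2 / α) - 1) atTop (nhds 0) := by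
    simpa using ((continuous_exp.tendsto 0).comp
      (tendsto_const_nhds.div_atTop tendsto_id)).sub_const 1
  refine hlim.congr' ?_
  filter_upwards [eventually_gt_atTop 0] with α hα
  exact (tsum_poisson_mul_one_sub_mul_pow_sq ρ α hα.ne').symm

/-- For `X ~ Poisson(2α)`, `E[(1 - e^{-2ρ}(1+ρ/α)^X)²] = e^{2ρ²/α} - 1`; in particular,
for fixed `ρ > 0` this quantity tends to `0` as `α → ∞`. -/
theorem stmt_3 (ρ : ℝ) (hρ : 0 < ρ) :
    (∀ α : ℝ, 0 < α →
      (∑' k : ℕ, Real.exp (-(2 * α)) * (2 * α) ^ k / (Nat.factorial k : ℝ)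
        * (1 - Real.exp (-(2 * ρ)) * (1 + ρ / α) ^ k) ^ 2)
      = Real.exp (2 * ρ ^ 2 / α) - 1)
    ∧ Tendsto (fun α : ℝ =>
        ∑' k : ℕ, Real.exp (-(2 * α)) * (2 * α) ^ k / (Nat.factorial k : ℝ)
          * (1 - Real.exp (-(2 * ρ)) * (1 + ρ / α) ^ k) ^ 2)
      atTop (nhds 0) :=
  stmt_3_general ρ
end

section
/- Let λ, μ : ℝ → ℝ be continuous functions with λ ≥ 0, let t > 0 and 0 ≤ z < 1. For s ∈ [0, t] define x(s) = 1 - ( exp(∫_{t-s}^t (μ(r) - λ(r)) dr)/(1 - z) + ∫_{t-s}^t λ(r) exp(∫_{t-s}^r (μ(u) - λ(u)) du) dr )^{-1}. Then x(0) = z and x solves the Riccati-type ordinary differential equation dx/ds = -λ(t-s) x(s)(1 - x(s)) + μ(t-s)(1 - x(s)) on [0, t]. -/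
/-!
The substitution `y = 1 / (1 - x)` turns the Riccati equation
`x' = -λ x (1 - x) + μ (1 - x)` into the linear equation `y' = (μ - λ) y + λ`, read backwards
in time. The bracket inverted in `x` is the variation-of-constants solution of that linear
equation with `y(0) = 1 / (1 - z)`; writing it through primitives `g` of `μ - λ` and `G` of
`λ e^g` makes it a product of two functions whose derivatives are immediate. It stays positive
on `[0, t]` because `λ ≥ 0`.
-/

open intervalIntegral

theorem HasDerivWithinAt.one_sub_inv_of_linear {y : ℝ → ℝ} {S : Set ℝ} {s l m : ℝ}
    (hy : HasDerivWithinAt y ((m - l) * y s + l) S s) (hys : y s ≠ 0) :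
    HasDerivWithinAt (fun s => 1 - (y s)⁻¹)
      (-l * ((1 - (y s)⁻¹) * (1 - (1 - (y s)⁻¹))) + m * (1 - (1 - (y s)⁻¹))) S s := by
  refine ((hy.fun_inv hys).const_sub 1).congr_deriv ?_
  field_simp
  ring

/-- The solution of `y' = ν(t - s) y + λ(t - s)`, `y(0) = c`, by variation of constants. -/
noncomputable def backwardLinearSolution (nu lam : ℝ → ℝ) (t c s : ℝ) : ℝ :=
  Real.exp (∫ r in (t - s)..t, nu r) * c
    + ∫ r in (t - s)..t, lam r * Real.exp (∫ u in (t - s)..r, nu u)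

theorem backwardLinearSolution_zero (nu lam : ℝ → ℝ) (t c : ℝ) :
    backwardLinearSolution nu lam t c 0 = c := by
  simp [backwardLinearSolution]

theorem backwardLinearSolution_pos {nu lam : ℝ → ℝ} {t c s : ℝ} (hc : 0 < c) (hs : 0 ≤ s)
    (hlam : ∀ r ∈ Set.Icc (t - s) t, 0 ≤ lam r) :
    0 < backwardLinearSolution nu lam t c s := by
  have hint : 0 ≤ ∫ r in (t - s)..t, lam r * Real.exp (∫ u in (t - s)..r, nu u) :=
    integral_nonneg (by linarith) fun r hr => mul_nonneg (hlam r hr) (Real.exp_pos _).le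
  unfold backwardLinearSolution
  positivity

theorem hasDerivAt_exp_neg_mul_sub_primitive {nu lam g G : ℝ → ℝ}
    (hg : ∀ y, HasDerivAt g (nu y) y) (hG : ∀ y, HasDerivAt G (lam y * Real.exp (g y)) y)
    (t C s : ℝ) :
    HasDerivAt (fun s => Real.exp (-g (t - s)) * (C + (G t - G (t - s))))
      (nu (t - s) * (Real.exp (-g (t - s)) * (C + (G t - G (t - s)))) + lam (t - s)) s := by
  have hts : HasDerivAt (fun s : ℝ => t - s) (-1) s := (hasDerivAt_id s).const_sub t
  have hexp := (((hg (t - s)).comp s hts).neg).exp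
  have hsum := (((hG (t - s)).comp s hts).const_sub (G t)).const_add C
  refine (hexp.fun_mul hsum).congr_deriv ?_
  have hcancel : Real.exp (-g (t - s)) * Real.exp (g (t - s)) = 1 := by
    rw [← Real.exp_add, neg_add_cancel, Real.exp_zero]
  simp only [Function.comp_apply, Pi.neg_apply]
  linear_combination lam (t - s) * hcancel

theorem backwardLinearSolution_eq_of_primitive {nu lam g G : ℝ → ℝ}
    (hg : ∀ a b, ∫ u in a..b, nu u = g b - g a)
    (hG : ∀ a b, ∫ r in a..b, lam r * Real.exp (g r) = G b - G a) (t c s : ℝ) :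
    backwardLinearSolution nu lam t c s
      = Real.exp (-g (t - s)) * (Real.exp (g t) * c + (G t - G (t - s))) := by
  have hfactor : ∀ r, lam r * Real.exp (∫ u in (t - s)..r, nu u)
      = Real.exp (-g (t - s)) * (lam r * Real.exp (g r)) := fun r => by
    rw [hg, Real.exp_sub, Real.exp_neg]; ring
  rw [backwardLinearSolution, integral_congr fun r _ => hfactor r, integral_const_mul, hG, hg,
    Real.exp_sub, Real.exp_neg]
  ring

theorem hasDerivAt_backwardLinearSolution {nu lam : ℝ → ℝ} (hnu : Continuous nu)
    (hlam : Continuous lam) (t c s : ℝ) :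
    HasDerivAt (backwardLinearSolution nu lam t c)
      (nu (t - s) * backwardLinearSolution nu lam t c s + lam (t - s)) s := by
  set g := fun y => ∫ u in (0 : ℝ)..y, nu u
  have hg : ∀ y, HasDerivAt g (nu y) y := fun y => (hnu.integral_hasStrictDerivAt 0 y).hasDerivAt
  have hGc : Continuous fun r => lam r * Real.exp (g r) :=
    hlam.mul <| Real.continuous_exp.comp <|
      continuous_iff_continuousAt.2 fun y => (hg y).continuousAt
  set G := fun y => ∫ r in (0 : ℝ)..y, lam r * Real.exp (g r)
  have heq : backwardLinearSolution nu lam t c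
      = fun s => Real.exp (-g (t - s)) * (Real.exp (g t) * c + (G t - G (t - s))) :=
    funext <| backwardLinearSolution_eq_of_primitive
      (fun a b => (integral_interval_sub_left (hnu.intervalIntegrable _ _)
        (hnu.intervalIntegrable _ _)).symm)
      (fun a b => (integral_interval_sub_left (hGc.intervalIntegrable _ _)
        (hGc.intervalIntegrable _ _)).symm) t c
  rw [heq]
  exact hasDerivAt_exp_neg_mul_sub_primitive hg
    (fun y => (hGc.integral_hasStrictDerivAt 0 y).hasDerivAt) t _ s

theorem stmt_6_general (lam mu : ℝ → ℝ) (hlam : Continuous lam) (hmu : Continuous mu)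
    (hlam0 : ∀ r, 0 ≤ lam r) (t : ℝ) (z : ℝ) (hz1 : z < 1) :
    let x : ℝ → ℝ := fun s =>
      1 - (Real.exp (∫ r in (t - s)..t, (mu r - lam r)) / (1 - z)
        + ∫ r in (t - s)..t, lam r * Real.exp (∫ u in (t - s)..r, (mu u - lam u)))⁻¹
    x 0 = z ∧
      ∀ s ∈ Set.Icc (0 : ℝ) t,
        HasDerivWithinAt x (-(lam (t - s)) * (x s * (1 - x s)) + mu (t - s) * (1 - x s))
          (Set.Icc (0 : ℝ) t) s := by
  intro x
  set y := backwardLinearSolution (fun u => mu u - lam u) lam t (1 - z)⁻¹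
  have hx : x = fun s => 1 - (y s)⁻¹ := by
    simp only [x, y, backwardLinearSolution, div_eq_mul_inv]
  rw [hx]
  refine ⟨by simp [y, backwardLinearSolution_zero], fun s hs => ?_⟩
  have hy := hasDerivAt_backwardLinearSolution (hmu.sub hlam) hlam t (1 - z)⁻¹ s
  have hpos : 0 < y s :=
    backwardLinearSolution_pos (inv_pos.2 (sub_pos.2 hz1)) hs.1 fun r _ => hlam0 r
  exact hy.hasDerivWithinAt.one_sub_inv_of_linear hpos.ne'

/-- The explicit solution of the Riccati-type characteristic ODE
`dx/ds = -λ(t-s)x(1-x) + μ(t-s)(1-x)` with `x(0) = z` for the generating function of a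
time-inhomogeneous birth–death process. -/
theorem stmt_6 (lam mu : ℝ → ℝ) (hlam : Continuous lam) (hmu : Continuous mu)
    (hlam0 : ∀ r, 0 ≤ lam r) (t : ℝ) (ht : 0 < t) (z : ℝ) (hz0 : 0 ≤ z) (hz1 : z < 1) :
    let x : ℝ → ℝ := fun s =>
      1 - (Real.exp (∫ r in (t - s)..t, (mu r - lam r)) / (1 - z)
        + ∫ r in (t - s)..t, lam r * Real.exp (∫ u in (t - s)..r, (mu u - lam u)))⁻¹
    x 0 = z ∧
      ∀ s ∈ Set.Icc (0 : ℝ) t,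
        HasDerivWithinAt x (-(lam (t - s)) * (x s * (1 - x s)) + mu (t - s) * (1 - x s))
          (Set.Icc (0 : ℝ) t) s :=
  stmt_6_general lam mu hlam hmu hlam0 t z hz1
end

section
/- For real numbers c1, c2 with 0 < c1 < c2 < 1, define y : ℝ → ℝ by y(r) = 1/(1 + exp(-(c2 - c1) r)). Then for every s ∈ ℝ, lim_{t → ∞} (1 - y(s)) ∫_s^t e^{-(1 - c1)(r - s)} / (1 - y(r)) dr = y(s)/(1 - c2) + (1 - y(s))/(1 - c1). -/
open Filter Topology Real MeasureTheory Set

/-! Writing `y r = σ((c2 - c1) r)` with `σ` the sigmoid, `1 / (1 - y r) = 1 + e^{(c2 - c1) r}`,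
so the integrand splits into two exponentials decaying at rates `1 - c1` and `1 - c2`, with
integrals over `(s, ∞)` equal to `1 / (1 - c1)` and `e^{(c2 - c1) s} / (1 - c2)`.
The identity `(1 - σ x) e^x = σ x` turns the second term into `y s / (1 - c2)`. -/

lemma one_sub_sigmoid_mul_exp (x : ℝ) : (1 - sigmoid x) * exp x = sigmoid x := by
  simpa [← sigmoid_neg] using sigmoid_mul_rexp_neg (-x)

lemma inv_one_sub_sigmoid (x : ℝ) : (1 - sigmoid x)⁻¹ = 1 + exp x := by
  rw [← sigmoid_neg, sigmoid_def, inv_inv, neg_neg]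

lemma tendsto_intervalIntegral_exp_neg_mul_sub {a : ℝ} (ha : 0 < a) (s : ℝ) :
    Tendsto (fun t => ∫ r in s..t, exp (-a * (r - s))) atTop (𝓝 a⁻¹) := by
  have hsplit : (fun r => exp (-a * (r - s))) = fun r => exp (a * s) * exp (-a * r) := by
    ext r
    rw [← exp_add]
    ring_nf
  have hint : IntegrableOn (fun r => exp (-a * (r - s))) (Ioi s) := by
    rw [hsplit]
    exact (integrableOn_exp_mul_Ioi (neg_lt_zero.2 ha) s).const_mul _
  have hval : ∫ r in Ioi s, exp (-a * (r - s)) = a⁻¹ := by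
    rw [hsplit, integral_const_mul, integral_exp_mul_Ioi (neg_lt_zero.2 ha), div_neg, neg_div,
      neg_neg, mul_div, ← exp_add]
    simp [neg_mul]
  rw [← hval]
  exact intervalIntegral_tendsto_integral_Ioi s hint tendsto_id

theorem stmt_10_general (c1 c2 : ℝ) (h12 : c1 < c2) (h2 : c2 < 1) :
    let y : ℝ → ℝ := fun r => 1 / (1 + Real.exp (-(c2 - c1) * r))
    ∀ s : ℝ,
      Tendsto (fun t : ℝ =>
          (1 - y s) * ∫ r in s..t, Real.exp (-(1 - c1) * (r - s)) / (1 - y r))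
        atTop (nhds (y s / (1 - c2) + (1 - y s) / (1 - c1))) := by
  intro y s
  have hy : ∀ r, y r = sigmoid ((c2 - c1) * r) := fun r => by
    simp only [y, one_div, sigmoid_def, neg_mul]
  have hintegrand : ∀ r, exp (-(1 - c1) * (r - s)) / (1 - y r)
      = exp (-(1 - c1) * (r - s)) + exp ((c2 - c1) * s) * exp (-(1 - c2) * (r - s)) := by
    intro r
    rw [hy, div_eq_mul_inv, inv_one_sub_sigmoid, mul_add, ← exp_add, ← exp_add]
    ring_nf
  have hlim : Tendsto (fun t => ∫ r in s..t, exp (-(1 - c1) * (r - s)) / (1 - y r)) atTop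
      (𝓝 ((1 - c1)⁻¹ + exp ((c2 - c1) * s) * (1 - c2)⁻¹)) := by
    have hcont (a : ℝ) : Continuous fun r => exp (-a * (r - s)) := by fun_prop
    have hsplit (t : ℝ) : ∫ r in s..t, exp (-(1 - c1) * (r - s)) / (1 - y r)
        = (∫ r in s..t, exp (-(1 - c1) * (r - s)))
          + exp ((c2 - c1) * s) * ∫ r in s..t, exp (-(1 - c2) * (r - s)) := by
      simp_rw [hintegrand]
      rw [intervalIntegral.integral_add ((hcont _).intervalIntegrable _ _)
        (((hcont _).intervalIntegrable _ _).const_mul _), intervalIntegral.integral_const_mul]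
    simp_rw [hsplit]
    exact (tendsto_intervalIntegral_exp_neg_mul_sub (by linarith) s).add
      ((tendsto_intervalIntegral_exp_neg_mul_sub (by linarith) s).const_mul _)
  convert hlim.const_mul (1 - y s) using 2
  rw [hy, mul_add, ← mul_assoc, one_sub_sigmoid_mul_exp]
  ring

/-- Limiting integral for the logistic curve `y(r) = 1/(1 + e^{-(c2-c1)r})`:
`(1-y(s)) ∫_s^t e^{-(1-c1)(r-s)}/(1-y(r)) dr → y(s)/(1-c2) + (1-y(s))/(1-c1)`
as `t → ∞`. -/
theorem stmt_10 (c1 c2 : ℝ) (h0 : 0 < c1) (h12 : c1 < c2) (h2 : c2 < 1) :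
    let y : ℝ → ℝ := fun r => 1 / (1 + Real.exp (-(c2 - c1) * r))
    ∀ s : ℝ,
      Tendsto (fun t : ℝ =>
          (1 - y s) * ∫ r in s..t, Real.exp (-(1 - c1) * (r - s)) / (1 - y r))
        atTop (nhds (y s / (1 - c2) + (1 - y s) / (1 - c1))) :=
  stmt_10_general c1 c2 h12 h2
end

section
/- Let ρ > 0 and let c1, c2 be real numbers with 0 < c1 < c2 < 1. Define y : ℝ → ℝ by y(r) = 1/(1 + exp(-(c2 - c1) r)). Then lim_{t → ∞} ∫_{-t}^{t} ρ y(s)(1 - y(s)) · ( exp(-∫_s^t (1 - c1 - (c2 - c1) y(r)) dr) + ∫_s^t exp(-∫_s^r (1 - c1 - (c2 - c1) y(u)) du) dr )^{-1} ds = ρ (1 - c1)(1 - c2)/(c2 - c1)² · log((1 - c1)/(1 - c2)). -/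
open Filter

/-!
Write `a = 1 - c1`, `b = 1 - c2` and `y r = sigmoid ((a - b) r)`. The net growth rate
`a - (a - b) y` has antiderivative `-log W` with `W r = e^{-a r} + e^{-b r}`, so the bracket in the
integrand is `(W t + ∫_s^t W) / W s`. Its inverse, the probability that a lineage founded at `s`
survives until `t`, lies in `[0, 1]` when `a, b ≤ 1`; hence the integrand is dominated by
`ρ y (1 - y)`, which is integrable as `y' / (a - b)`. As `t → ∞` the integrand tends to
`ρ y (1 - y) · a b / (b + (a - b) y)`, the derivative of `ρ a b / (a - b)² · log (b + (a - b) y)`,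
so dominated convergence and `y (-∞) = 0`, `y (∞) = 1` give `ρ a b / (a - b)² · log (a / b)`.
-/

namespace LogisticImmigration

open MeasureTheory Real Set Topology

lemma tendsto_intervalIntegral_neg_self_of_dominated {E : Type*} [NormedAddCommGroup E]
    [NormedSpace ℝ E] {F : ℝ → ℝ → E} {f : ℝ → E} {g : ℝ → ℝ}
    (hF_meas : ∀ t, AEStronglyMeasurable (F t)) (h_bound : ∀ t s, s ≤ t → ‖F t s‖ ≤ g s)
    (hg : Integrable g) (h_lim : ∀ s, Tendsto (F · s) atTop (𝓝 (f s))) :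
    Tendsto (fun t => ∫ s in (-t)..t, F t s) atTop (𝓝 (∫ s, f s)) := by
  have hind : (fun t => ∫ s, (Ioc (-t) t).indicator (F t) s)
      =ᶠ[atTop] fun t => ∫ s in (-t)..t, F t s := by
    filter_upwards [eventually_ge_atTop 0] with t ht
    rw [intervalIntegral.integral_of_le (by linarith), integral_indicator measurableSet_Ioc]
  refine (tendsto_integral_filter_of_dominated_convergence g
    (Eventually.of_forall fun t => (hF_meas t).indicator measurableSet_Ioc)
    (Eventually.of_forall fun t => ae_of_all _ fun s => ?_) hg
    (ae_of_all _ fun s => (h_lim s).congr' ?_)).congr' hind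
  · by_cases hs : s ∈ Ioc (-t) t
    · simpa [indicator_of_mem hs] using h_bound t s hs.2
    · simpa [indicator_of_notMem hs] using (norm_nonneg _).trans (h_bound s s le_rfl)
  · filter_upwards [eventually_gt_atTop |s|] with t ht
    have hs : s ∈ Ioc (-t) t := ⟨by linarith [neg_abs_le s], (le_abs_self s).trans ht.le⟩
    rw [indicator_of_mem hs]

lemma integrable_sigmoid_mul_one_sub : Integrable fun x => sigmoid x * (1 - sigmoid x) := by
  have hcont : Continuous fun x => sigmoid x * (1 - sigmoid x) := by fun_prop
  refine integrable_of_intervalIntegral_norm_bounded 1 (fun _ => hcont.integrableOn_Ioc)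
    tendsto_neg_atTop_atBot tendsto_id (Eventually.of_forall fun t => ?_)
  simp_rw [norm_of_nonneg (mul_nonneg (sigmoid_nonneg _) (sub_nonneg.2 (sigmoid_le_one _)))]
  rw [intervalIntegral.integral_eq_sub_of_hasDerivAt (fun x _ => hasDerivAt_sigmoid x)
    (hcont.intervalIntegrable _ _)]
  linarith [sigmoid_le_one (id t), sigmoid_nonneg (-t)]

lemma hasDerivAt_exp_neg_mul (c r : ℝ) :
    HasDerivAt (fun r => exp (-(c * r))) (-(c * exp (-(c * r)))) r := by
  simpa [mul_comm] using ((hasDerivAt_id' r).const_mul c).neg.exp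

variable {a b : ℝ}

noncomputable def weight (a b r : ℝ) : ℝ := exp (-(a * r)) + exp (-(b * r))

/-- `∫_r^∞ weight a b` when `a, b > 0`. -/
noncomputable def weightTail (a b r : ℝ) : ℝ := exp (-(a * r)) / a + exp (-(b * r)) / b

noncomputable def survivalProb (a b s t : ℝ) : ℝ :=
  weight a b s / (weight a b t + weightTail a b s - weightTail a b t)

lemma weight_pos (a b r : ℝ) : 0 < weight a b r := by unfold weight; positivity

lemma sigmoid_sub_mul_eq_exp_div_weight (a b r : ℝ) :
    sigmoid ((a - b) * r) = exp (-(b * r)) / weight a b r := by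
  have h : exp (-((a - b) * r)) = exp (-(a * r)) / exp (-(b * r)) := by
    rw [← exp_sub]; ring_nf
  rw [sigmoid_def, h, weight, eq_div_iff (by positivity)]
  field_simp
  ring

lemma hasDerivAt_weight (a b r : ℝ) :
    HasDerivAt (weight a b) (-(a * exp (-(a * r)) + b * exp (-(b * r)))) r :=
  (hasDerivAt_exp_neg_mul a r).add (hasDerivAt_exp_neg_mul b r) |>.congr_deriv (neg_add _ _).symm

lemma hasDerivAt_neg_log_weight (a b r : ℝ) :
    HasDerivAt (fun r => -log (weight a b r)) (a - (a - b) * sigmoid ((a - b) * r)) r := by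
  refine ((hasDerivAt_weight a b r).log (weight_pos a b r).ne').neg.congr_deriv ?_
  have hW := weight_pos a b r
  rw [sigmoid_sub_mul_eq_exp_div_weight]
  unfold weight at *
  field_simp
  ring

lemma exp_neg_integral_sub_mul_sigmoid (a b s r : ℝ) :
    exp (-∫ u in s..r, (a - (a - b) * sigmoid ((a - b) * u))) = weight a b r / weight a b s := by
  rw [intervalIntegral.integral_eq_sub_of_hasDerivAt (fun u _ => hasDerivAt_neg_log_weight a b u)
    (by apply Continuous.intervalIntegrable; fun_prop), neg_sub, sub_neg_eq_add, neg_add_eq_sub,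
    exp_sub, exp_log (weight_pos a b r), exp_log (weight_pos a b s)]

lemma hasDerivAt_weightTail (ha : a ≠ 0) (hb : b ≠ 0) (r : ℝ) :
    HasDerivAt (weightTail a b) (-weight a b r) r := by
  refine ((hasDerivAt_exp_neg_mul a r).div_const a).add ((hasDerivAt_exp_neg_mul b r).div_const b)
    |>.congr_deriv ?_
  unfold weight
  field_simp
  ring

lemma integral_weight (ha : a ≠ 0) (hb : b ≠ 0) (s t : ℝ) :
    ∫ r in s..t, weight a b r = weightTail a b s - weightTail a b t := by
  rw [intervalIntegral.integral_eq_sub_of_hasDerivAt (f := fun r => -weightTail a b r)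
    (fun r _ => (hasDerivAt_weightTail ha hb r).neg.congr_deriv (neg_neg _))
    (by apply Continuous.intervalIntegrable; unfold weight; fun_prop)]
  ring

lemma inv_exp_neg_integral_add_integral_eq_survivalProb (ha : a ≠ 0) (hb : b ≠ 0) (s t : ℝ) :
    (exp (-∫ r in s..t, (a - (a - b) * sigmoid ((a - b) * r)))
      + ∫ r in s..t, exp (-∫ u in s..r, (a - (a - b) * sigmoid ((a - b) * u))))⁻¹
      = survivalProb a b s t := by
  simp only [exp_neg_integral_sub_mul_sigmoid, intervalIntegral.integral_div,
    integral_weight ha hb]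
  rw [survivalProb, ← add_div, inv_div, add_sub_assoc]

lemma weight_le_weight_add_weightTail_sub (ha : 0 < a) (ha1 : a ≤ 1) (hb : 0 < b) (hb1 : b ≤ 1)
    {s t : ℝ} (hst : s ≤ t) :
    weight a b s ≤ weight a b t + weightTail a b s - weightTail a b t := by
  have key {c : ℝ} (hc : 0 < c) (hc1 : c ≤ 1) :
      exp (-(c * s)) - exp (-(c * t)) ≤ exp (-(c * s)) / c - exp (-(c * t)) / c := by
    rw [← sub_div]
    exact le_div_self (sub_nonneg.2 (exp_le_exp.2 (by nlinarith))) hc hc1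
  unfold weight weightTail
  linarith [key ha ha1, key hb hb1]

lemma survivalProb_mem_Icc (ha : 0 < a) (ha1 : a ≤ 1) (hb : 0 < b) (hb1 : b ≤ 1) {s t : ℝ}
    (hst : s ≤ t) : survivalProb a b s t ∈ Icc 0 1 := by
  have hW := weight_pos a b s
  have hD := weight_le_weight_add_weightTail_sub ha ha1 hb hb1 hst
  exact ⟨div_nonneg hW.le (hW.trans_le hD).le, div_le_one_of_le₀ hD (hW.trans_le hD).le⟩

lemma tendsto_survivalProb (ha : 0 < a) (hb : 0 < b) (s : ℝ) :
    Tendsto (survivalProb a b s) atTop (𝓝 (weight a b s / weightTail a b s)) := by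
  have hexp {c : ℝ} (hc : 0 < c) : Tendsto (fun t => exp (-(c * t))) atTop (𝓝 0) :=
    tendsto_exp_atBot.comp (tendsto_neg_atTop_atBot.comp (tendsto_id.const_mul_atTop hc))
  have hW : Tendsto (weight a b) atTop (𝓝 0) := by
    unfold weight; simpa using (hexp ha).add (hexp hb)
  have hT : Tendsto (weightTail a b) atTop (𝓝 0) := by
    unfold weightTail; simpa using ((hexp ha).div_const a).add ((hexp hb).div_const b)
  have hD := (hW.add_const (weightTail a b s)).sub hT
  rw [zero_add, sub_zero] at hD
  exact tendsto_const_nhds.div hD (by unfold weightTail; positivity)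

lemma weight_div_weightTail (ha : a ≠ 0) (hb : b ≠ 0) (s : ℝ) :
    weight a b s / weightTail a b s = a * b / (b + (a - b) * sigmoid ((a - b) * s)) := by
  have hW := weight_pos a b s
  rw [sigmoid_sub_mul_eq_exp_div_weight]
  unfold weight weightTail at *
  field_simp
  ring

lemma hasDerivAt_log_add_mul_sigmoid (hb : 0 < b) (hba : b < a) (s : ℝ) :
    HasDerivAt (fun s => a * b / (a - b) ^ 2 * log (b + (a - b) * sigmoid ((a - b) * s)))
      (sigmoid ((a - b) * s) * (1 - sigmoid ((a - b) * s))
        * (a * b / (b + (a - b) * sigmoid ((a - b) * s)))) s := by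
  have hβ : a - b ≠ 0 := sub_ne_zero.2 hba.ne'
  have hpos : 0 < b + (a - b) * sigmoid ((a - b) * s) :=
    add_pos_of_pos_of_nonneg hb (mul_nonneg (sub_nonneg.2 hba.le) (sigmoid_nonneg _))
  have hσ : HasDerivAt (fun s => sigmoid ((a - b) * s))
      (sigmoid ((a - b) * s) * (1 - sigmoid ((a - b) * s)) * (a - b)) s :=
    (hasDerivAt_sigmoid _).comp s (by simpa using (hasDerivAt_id' s).const_mul (a - b))
  refine (((hσ.const_mul (a - b)).const_add b).log hpos.ne').const_mul (a * b / (a - b) ^ 2)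
    |>.congr_deriv ?_
  field_simp

lemma integral_sigmoid_mul_one_sub_mul_div (hb : 0 < b) (hba : b < a) (ha1 : a ≤ 1) :
    ∫ s, sigmoid ((a - b) * s) * (1 - sigmoid ((a - b) * s))
        * (a * b / (b + (a - b) * sigmoid ((a - b) * s)))
      = a * b / (a - b) ^ 2 * log (a / b) := by
  have hβ : 0 < a - b := sub_pos.2 hba
  have hlim {l : Filter ℝ} {y : ℝ} (hy : Tendsto sigmoid l (𝓝 y)) (hl : Tendsto ((a - b) * ·) l l)
      (hy0 : b + (a - b) * y ≠ 0) :
      Tendsto (fun s => a * b / (a - b) ^ 2 * log (b + (a - b) * sigmoid ((a - b) * s))) l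
        (𝓝 (a * b / (a - b) ^ 2 * log (b + (a - b) * y))) :=
    (((hy.comp hl).const_mul (a - b)).const_add b |>.log hy0).const_mul _
  have hint : Integrable fun s => sigmoid ((a - b) * s) * (1 - sigmoid ((a - b) * s))
      * (a * b / (b + (a - b) * sigmoid ((a - b) * s))) := by
    refine (integrable_sigmoid_mul_one_sub.comp_mul_left' hβ.ne').mono'
      (Measurable.aestronglyMeasurable (by fun_prop)) (Eventually.of_forall fun s => ?_)
    have hσ := sigmoid_nonneg ((a - b) * s)
    have hσ' := sub_nonneg.2 (sigmoid_le_one ((a - b) * s))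
    have hD : a * b ≤ b + (a - b) * sigmoid ((a - b) * s) := by nlinarith
    have hab : 0 < a * b := mul_pos (hb.trans hba) hb
    rw [norm_of_nonneg (mul_nonneg (mul_nonneg hσ hσ') (div_nonneg hab.le (hab.trans_le hD).le))]
    exact mul_le_of_le_one_right (mul_nonneg hσ hσ') (div_le_one_of_le₀ hD (hab.trans_le hD).le)
  rw [integral_of_hasDerivAt_of_tendsto (hasDerivAt_log_add_mul_sigmoid hb hba) hint
    (hlim tendsto_sigmoid_atBot (tendsto_id.const_mul_atBot hβ) (by simp [hb.ne']))
    (hlim tendsto_sigmoid_atTop (tendsto_id.const_mul_atTop hβ) (by simp; linarith)),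
    log_div (by linarith) hb.ne']
  ring_nf

theorem tendsto_integral_immigrantSurvival (ρ : ℝ) (hb : 0 < b) (hba : b < a) (ha1 : a ≤ 1) :
    Tendsto (fun t => ∫ s in (-t)..t, ρ * sigmoid ((a - b) * s) * (1 - sigmoid ((a - b) * s)) *
        (exp (-∫ r in s..t, (a - (a - b) * sigmoid ((a - b) * r)))
          + ∫ r in s..t, exp (-∫ u in s..r, (a - (a - b) * sigmoid ((a - b) * u))))⁻¹)
      atTop (𝓝 (ρ * a * b / (a - b) ^ 2 * log (a / b))) := by
  have ha : 0 < a := hb.trans hba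
  have hσ (s : ℝ) : 0 ≤ sigmoid ((a - b) * s) * (1 - sigmoid ((a - b) * s)) :=
    mul_nonneg (sigmoid_nonneg _) (sub_nonneg.2 (sigmoid_le_one _))
  have key := tendsto_intervalIntegral_neg_self_of_dominated
    (F := fun t s => sigmoid ((a - b) * s) * (1 - sigmoid ((a - b) * s)) * survivalProb a b s t)
    (fun t => Measurable.aestronglyMeasurable (by unfold survivalProb weight weightTail; fun_prop))
    (fun t s hst => by
      obtain ⟨hP0, hP1⟩ := survivalProb_mem_Icc ha ha1 hb (hba.le.trans ha1) hst
      rw [norm_of_nonneg (mul_nonneg (hσ s) hP0)]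
      exact mul_le_of_le_one_right (hσ s) hP1)
    (integrable_sigmoid_mul_one_sub.comp_mul_left' (sub_pos.2 hba).ne')
    (fun s => by
      simpa only [weight_div_weightTail ha.ne' hb.ne'] using
        (tendsto_survivalProb ha hb s).const_mul _)
  rw [integral_sigmoid_mul_one_sub_mul_div hb hba ha1] at key
  simp only [mul_assoc, inv_exp_neg_integral_add_integral_eq_survivalProb ha.ne' hb.ne',
    intervalIntegral.integral_const_mul] at key ⊢
  convert key.const_mul ρ using 2
  ring

end LogisticImmigration

theorem stmt_11_general (ρ c1 c2 : ℝ) (h0 : 0 < c1) (h12 : c1 < c2) (h2 : c2 < 1) :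
    let y : ℝ → ℝ := fun r => 1 / (1 + Real.exp (-(c2 - c1) * r))
    Tendsto (fun t : ℝ =>
        ∫ s in (-t)..t, ρ * y s * (1 - y s) *
          (Real.exp (-(∫ r in s..t, (1 - c1 - (c2 - c1) * y r)))
            + ∫ r in s..t, Real.exp (-(∫ u in s..r, (1 - c1 - (c2 - c1) * y u))))⁻¹)
      atTop
      (nhds (ρ * (1 - c1) * (1 - c2) / (c2 - c1) ^ 2 * Real.log ((1 - c1) / (1 - c2)))) := by
  have hβ : c2 - c1 = (1 - c1) - (1 - c2) := by ring
  simp only [hβ, one_div, neg_mul, ← Real.sigmoid_def]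
  exact LogisticImmigration.tendsto_integral_immigrantSurvival ρ (by linarith) (by linarith)
    (by linarith)

/-- The analytic core of the survival probability of the non-homogeneous branching
process with immigration: with `y(r) = 1/(1 + e^{-(c2-c1)r})`,
`∫_{-t}^{t} ρ y(s)(1-y(s)) (exp(-∫_s^t(1-c1-(c2-c1)y)) + ∫_s^t exp(-∫_s^r(1-c1-(c2-c1)y)) dr)⁻¹ ds`
converges as `t → ∞` to `ρ(1-c1)(1-c2)/(c2-c1)² · log((1-c1)/(1-c2))`. -/
theorem stmt_11 (ρ c1 c2 : ℝ) (hρ : 0 < ρ) (h0 : 0 < c1) (h12 : c1 < c2) (h2 : c2 < 1) :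
    let y : ℝ → ℝ := fun r => 1 / (1 + Real.exp (-(c2 - c1) * r))
    Tendsto (fun t : ℝ =>
        ∫ s in (-t)..t, ρ * y s * (1 - y s) *
          (Real.exp (-(∫ r in s..t, (1 - c1 - (c2 - c1) * y r)))
            + ∫ r in s..t, Real.exp (-(∫ u in s..r, (1 - c1 - (c2 - c1) * y u))))⁻¹)
      atTop
      (nhds (ρ * (1 - c1) * (1 - c2) / (c2 - c1) ^ 2 * Real.log ((1 - c1) / (1 - c2)))) :=
  stmt_11_general ρ c1 c2 h0 h12 h2
end

section
/- Let ρ > 0 and let c1, c2 be real numbers with 0 < c1 < c2 < 1. Define y : ℝ → ℝ by y(r) = 1/(1 + exp(-(c2 - c1) r)). Then ∫_{-∞}^{∞} ρ y(s)(1 - y(s)) · (1 - c1)(1 - c2) / ((1 - c1) y(s) + (1 - c2)(1 - y(s))) ds = ρ (1 - c1)(1 - c2)/(c2 - c1)² · log((1 - c1)/(1 - c2)), and the integrand is integrable over ℝ. -/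
open MeasureTheory Filter Topology

/-!
With `p = 1 - c1`, `q = 1 - c2` and `a = c2 - c1 = p - q`, the logistic curve solves
`y' = a y (1 - y)`, so the integrand is the constant `ρ p q / a²` times the derivative of
`log (p y + q (1 - y))`. As `y` runs monotonically from `0` to `1` over the real line, this
logarithm increases from `log q` to `log p`; a nonnegative derivative of a function with finite
limits at `±∞` is integrable, with integral the difference of the limits.
-/

theorem integrable_deriv_and_integral_eq_of_nonneg {g g' : ℝ → ℝ} {m n : ℝ}
    (hderiv : ∀ x, HasDerivAt g (g' x) x) (hg' : ∀ x, 0 ≤ g' x)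
    (hbot : Tendsto g atBot (𝓝 m)) (htop : Tendsto g atTop (𝓝 n)) :
    Integrable g' ∧ ∫ x, g' x = n - m := by
  have hcont : Continuous g := continuous_iff_continuousAt.2 fun x => (hderiv x).continuousAt
  have hint : ∀ a b, IntervalIntegrable g' volume a b := fun a b =>
    intervalIntegral.intervalIntegrable_deriv_of_nonneg hcont.continuousOn
      (fun x _ => hderiv x) (fun x _ => hg' x)
  have hsymm : Tendsto (fun i => ∫ x in -i..i, ‖g' x‖) atTop (𝓝 (n - m)) := by
    simp_rw [Real.norm_of_nonneg (hg' _),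
      intervalIntegral.integral_eq_sub_of_hasDerivAt (fun x _ => hderiv x) (hint _ _)]
    exact htop.sub (hbot.comp tendsto_neg_atTop_atBot)
  have hg'_int : Integrable g' :=
    integrable_of_intervalIntegral_norm_tendsto _ (fun i => (hint (-i) i).1)
      tendsto_neg_atTop_atBot tendsto_id hsymm
  exact ⟨hg'_int, integral_of_hasDerivAt_of_tendsto hderiv hg'_int hbot htop⟩

noncomputable def logistic (a r : ℝ) : ℝ := 1 / (1 + Real.exp (-a * r))

namespace logistic

variable {a : ℝ}

theorem pos (a r : ℝ) : 0 < logistic a r := by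
  unfold logistic; positivity

theorem lt_one (a r : ℝ) : logistic a r < 1 := by
  unfold logistic
  rw [div_lt_one (by positivity)]
  linarith [Real.exp_pos (-a * r)]

theorem hasDerivAt (a r : ℝ) :
    HasDerivAt (logistic a) (a * logistic a r * (1 - logistic a r)) r := by
  have hE : 1 + Real.exp (-a * r) ≠ 0 := by positivity
  have hexp : HasDerivAt (fun s => 1 + Real.exp (-a * s)) (Real.exp (-a * r) * -a) r := by
    simpa using (((hasDerivAt_id r).const_mul (-a)).exp).const_add 1
  refine ((hasDerivAt_const r 1).div hexp hE).congr_deriv ?_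
  simp only [logistic]
  field_simp
  ring

theorem tendsto_atTop (ha : 0 < a) : Tendsto (logistic a) atTop (𝓝 1) := by
  have hexp : Tendsto (fun r => Real.exp (-a * r)) atTop (𝓝 0) :=
    Real.tendsto_exp_atBot.comp (tendsto_id.const_mul_atTop_of_neg (neg_lt_zero.2 ha))
  unfold logistic
  simpa using (hexp.const_add 1).inv₀ (by norm_num)

theorem tendsto_atBot (ha : 0 < a) : Tendsto (logistic a) atBot (𝓝 0) := by
  have hexp : Tendsto (fun r => Real.exp (-a * r)) atBot atTop :=
    Real.tendsto_exp_atTop.comp (tendsto_id.const_mul_atBot_of_neg (neg_lt_zero.2 ha))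
  exact tendsto_const_nhds.div_atTop (tendsto_atTop_add_const_left _ 1 hexp)

variable {p q : ℝ}

theorem mix_pos (hp : 0 < p) (hq : 0 < q) (r : ℝ) :
    0 < p * logistic a r + q * (1 - logistic a r) := by
  have := pos a r
  have := sub_pos.2 (lt_one a r)
  positivity

theorem hasDerivAt_log_mix (hp : 0 < p) (hq : 0 < q) (r : ℝ) :
    HasDerivAt (fun s => Real.log (p * logistic a s + q * (1 - logistic a s)))
      ((p - q) * (a * logistic a r * (1 - logistic a r)) /
        (p * logistic a r + q * (1 - logistic a r))) r := by
  have hmix := ((hasDerivAt a r).const_mul p).add (((hasDerivAt a r).const_sub 1).const_mul q)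
  exact (hmix.log (mix_pos hp hq r).ne').congr_deriv (by simp only [Pi.add_apply]; ring)

theorem tendsto_log_mix_atTop (ha : 0 < a) (hp : 0 < p) :
    Tendsto (fun s => Real.log (p * logistic a s + q * (1 - logistic a s))) atTop
      (𝓝 (Real.log p)) := by
  have hmix := ((tendsto_atTop ha).const_mul p).add (((tendsto_atTop ha).const_sub 1).const_mul q)
  simp only [mul_one, sub_self, mul_zero, add_zero] at hmix
  exact (Real.continuousAt_log hp.ne').tendsto.comp hmix

theorem tendsto_log_mix_atBot (ha : 0 < a) (hq : 0 < q) :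
    Tendsto (fun s => Real.log (p * logistic a s + q * (1 - logistic a s))) atBot
      (𝓝 (Real.log q)) := by
  have hmix := ((tendsto_atBot ha).const_mul p).add (((tendsto_atBot ha).const_sub 1).const_mul q)
  simp only [mul_zero, sub_zero, mul_one, zero_add] at hmix
  exact (Real.continuousAt_log hq.ne').tendsto.comp hmix

theorem integrable_and_integral_deriv_log_mix (ha : 0 < a) (hq : 0 < q) (hqp : q ≤ p) :
    let D := fun s => p * logistic a s + q * (1 - logistic a s)
    Integrable (fun s => (p - q) * (a * logistic a s * (1 - logistic a s)) / D s) ∧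
      ∫ s, (p - q) * (a * logistic a s * (1 - logistic a s)) / D s = Real.log p - Real.log q := by
  have hp : 0 < p := hq.trans_le hqp
  have hnonneg (s : ℝ) : 0 ≤ (p - q) * (a * logistic a s * (1 - logistic a s)) /
      (p * logistic a s + q * (1 - logistic a s)) := by
    have := pos a s
    have := sub_pos.2 (lt_one a s)
    have := mix_pos hp hq (a := a) s
    have := sub_nonneg.2 hqp
    positivity
  exact integrable_deriv_and_integral_eq_of_nonneg (hasDerivAt_log_mix hp hq) hnonneg
    (tendsto_log_mix_atBot ha hq) (tendsto_log_mix_atTop ha hp)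

end logistic

theorem stmt_12_general (ρ c1 c2 : ℝ) (h12 : c1 < c2) (h2 : c2 < 1) :
    let y : ℝ → ℝ := fun r => 1 / (1 + Real.exp (-(c2 - c1) * r))
    Integrable (fun s : ℝ => ρ * y s * (1 - y s) *
        ((1 - c1) * (1 - c2) / ((1 - c1) * y s + (1 - c2) * (1 - y s))))
      ∧ (∫ s : ℝ, ρ * y s * (1 - y s) *
          ((1 - c1) * (1 - c2) / ((1 - c1) * y s + (1 - c2) * (1 - y s))))
        = ρ * (1 - c1) * (1 - c2) / (c2 - c1) ^ 2 * Real.log ((1 - c1) / (1 - c2)) := by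
  intro y
  simp only [show y = logistic (c2 - c1) from rfl]
  set a := c2 - c1
  have ha : 0 < a := sub_pos.2 h12
  have hp : 0 < 1 - c1 := by linarith
  have hq : 0 < 1 - c2 := by linarith
  obtain ⟨hint, hval⟩ := logistic.integrable_and_integral_deriv_log_mix ha hq
    (by linarith : 1 - c2 ≤ 1 - c1)
  set C := ρ * (1 - c1) * (1 - c2) / a ^ 2
  have hintegrand : (fun s => ρ * logistic a s * (1 - logistic a s) *
      ((1 - c1) * (1 - c2) / ((1 - c1) * logistic a s + (1 - c2) * (1 - logistic a s)))) =
        fun s => C * (((1 - c1) - (1 - c2)) * (a * logistic a s * (1 - logistic a s)) /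
          ((1 - c1) * logistic a s + (1 - c2) * (1 - logistic a s))) := by
    funext s
    have := (logistic.mix_pos hp hq (a := a) s).ne'
    have := ha.ne'
    rw [show (1 - c1) - (1 - c2) = a by ring]
    simp only [C]
    field_simp
  rw [hintegrand, integral_const_mul, hval, Real.log_div hp.ne' hq.ne']
  exact ⟨hint.const_mul C, rfl⟩

/-- Improper integral over ℝ for the logistic curve `y(s) = 1/(1 + e^{-(c2-c1)s})`:
the integrand `ρ y(1-y)(1-c1)(1-c2)/((1-c1)y + (1-c2)(1-y))` is integrable and its
integral equals `ρ(1-c1)(1-c2)/(c2-c1)² · log((1-c1)/(1-c2))`. -/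
theorem stmt_12 (ρ c1 c2 : ℝ) (hρ : 0 < ρ) (h0 : 0 < c1) (h12 : c1 < c2) (h2 : c2 < 1) :
    let y : ℝ → ℝ := fun r => 1 / (1 + Real.exp (-(c2 - c1) * r))
    Integrable (fun s : ℝ => ρ * y s * (1 - y s) *
        ((1 - c1) * (1 - c2) / ((1 - c1) * y s + (1 - c2) * (1 - y s))))
      ∧ (∫ s : ℝ, ρ * y s * (1 - y s) *
          ((1 - c1) * (1 - c2) / ((1 - c1) * y s + (1 - c2) * (1 - y s))))
        = ρ * (1 - c1) * (1 - c2) / (c2 - c1) ^ 2 * Real.log ((1 - c1) / (1 - c2)) :=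
  stmt_12_general ρ c1 c2 h12 h2
end

section
/- Let z, c, p, ε > 0. For α > 1 define f_α(t) = c / ((1 + c) e^{t α c} - 1) and m_α = ⌈z α^p⌉. Then lim_{α → ∞} [ 1 - (1 - f_α( (log α / α) · (p/c + ε) ))^{m_α} ] = 0. -/
open Filter

/-- First limit in display (eq:2198): with `f_α(t) = c/((1+c)e^{tαc} - 1)` and
`m_α = ⌈z α^p⌉`, one has `1 - (1 - f_α((log α/α)(p/c + ε)))^{m_α} → 0` as `α → ∞`:
the subcritical branching process started from `z α^p` individuals is extinct by
time `(log α/α)(p/c + ε)` with probability tending to one. -/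
theorem stmt_15 (z c p ε : ℝ) (hz : 0 < z) (hc : 0 < c) (hp : 0 < p) (hε : 0 < ε) :
    Tendsto (fun α : ℝ =>
        1 - (1 - c / ((1 + c) * Real.exp ((Real.log α / α) * (p / c + ε) * α * c) - 1))
              ^ ⌈z * α ^ p⌉₊)
      atTop (nhds 0) := by
  have hd : 0 < ε * c := mul_pos hε hc
  have hpd : 0 < p + ε * c := by linarith
  -- the dominating function tends to 0
  have hub : Tendsto (fun α : ℝ => 2 * z * c * α ^ (-(ε * c))) atTop (nhds 0) := by
    have h := (tendsto_rpow_neg_atTop hd).const_mul (2 * z * c)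
    simpa using h
  apply squeeze_zero' ?_ ?_ hub
  · -- eventual nonnegativity
    filter_upwards [eventually_ge_atTop 1,
      (tendsto_rpow_atTop hpd).eventually_ge_atTop (max (1 / c) c)] with α hα1 hA
    have hα0 : (0 : ℝ) < α := lt_of_lt_of_le one_pos hα1
    have hApos : (0 : ℝ) < α ^ (p + ε * c) := Real.rpow_pos_of_pos hα0 _
    have hE : Real.exp ((Real.log α / α) * (p / c + ε) * α * c) = α ^ (p + ε * c) := by
      rw [Real.rpow_def_of_pos hα0]
      congr 1
      field_simp
    rw [hE]
    have hc1 : c * α ^ (p + ε * c) ≥ 1 := by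
      have := le_trans (le_max_left (1 / c) c) hA
      calc (1 : ℝ) = c * (1 / c) := by field_simp
        _ ≤ c * α ^ (p + ε * c) := by
            exact mul_le_mul_of_nonneg_left this hc.le
    have hD : α ^ (p + ε * c) ≤ (1 + c) * α ^ (p + ε * c) - 1 := by nlinarith
    have hcD : c ≤ (1 + c) * α ^ (p + ε * c) - 1 := by
      have := le_trans (le_max_right (1 / c) c) hA
      linarith
    have hDpos : (0 : ℝ) < (1 + c) * α ^ (p + ε * c) - 1 := by linarith
    have hf1 : c / ((1 + c) * α ^ (p + ε * c) - 1) ≤ 1 := by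
      rw [div_le_one hDpos]; exact hcD
    have hf0 : 0 ≤ c / ((1 + c) * α ^ (p + ε * c) - 1) :=
      div_nonneg hc.le hDpos.le
    have : (1 - c / ((1 + c) * α ^ (p + ε * c) - 1)) ^ ⌈z * α ^ p⌉₊ ≤ 1 :=
      pow_le_one₀ (by linarith) (by linarith)
    linarith
  · -- eventual upper bound
    filter_upwards [eventually_ge_atTop 1,
      (tendsto_rpow_atTop hpd).eventually_ge_atTop (max (1 / c) c),
      (tendsto_rpow_atTop hp).eventually_ge_atTop (1 / z)] with α hα1 hA hzA
    have hα0 : (0 : ℝ) < α := lt_of_lt_of_le one_pos hα1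
    have hApos : (0 : ℝ) < α ^ (p + ε * c) := Real.rpow_pos_of_pos hα0 _
    have hppos : (0 : ℝ) < α ^ p := Real.rpow_pos_of_pos hα0 _
    have hE : Real.exp ((Real.log α / α) * (p / c + ε) * α * c) = α ^ (p + ε * c) := by
      rw [Real.rpow_def_of_pos hα0]
      congr 1
      field_simp
    rw [hE]
    set f := c / ((1 + c) * α ^ (p + ε * c) - 1) with hf
    have hc1 : c * α ^ (p + ε * c) ≥ 1 := by
      have := le_trans (le_max_left (1 / c) c) hA
      calc (1 : ℝ) = c * (1 / c) := by field_simp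
        _ ≤ c * α ^ (p + ε * c) := mul_le_mul_of_nonneg_left this hc.le
    have hD : α ^ (p + ε * c) ≤ (1 + c) * α ^ (p + ε * c) - 1 := by nlinarith
    have hcD : c ≤ (1 + c) * α ^ (p + ε * c) - 1 := by
      have := le_trans (le_max_right (1 / c) c) hA
      linarith
    have hDpos : (0 : ℝ) < (1 + c) * α ^ (p + ε * c) - 1 := by linarith
    have hf1 : f ≤ 1 := by rw [hf, div_le_one hDpos]; exact hcD
    have hf0 : 0 ≤ f := div_nonneg hc.le hDpos.le
    have hfle : f ≤ c / α ^ (p + ε * c) := by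
      rw [hf]
      exact div_le_div_of_nonneg_left hc.le hApos hD
    -- Bernoulli
    have hbern : 1 + (⌈z * α ^ p⌉₊ : ℝ) * (-f) ≤ (1 + (-f)) ^ ⌈z * α ^ p⌉₊ :=
      one_add_mul_le_pow (by linarith) _
    have hstep1 : 1 - (1 - f) ^ ⌈z * α ^ p⌉₊ ≤ (⌈z * α ^ p⌉₊ : ℝ) * f := by
      have : (1 + (-f)) = 1 - f := by ring
      rw [this] at hbern
      linarith
    -- ceiling bound
    have hz1 : 1 ≤ z * α ^ p := by
      calc (1 : ℝ) = z * (1 / z) := by field_simp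
        _ ≤ z * α ^ p := mul_le_mul_of_nonneg_left hzA hz.le
    have hceil : (⌈z * α ^ p⌉₊ : ℝ) ≤ 2 * z * α ^ p := by
      have h1 : (⌈z * α ^ p⌉₊ : ℝ) < z * α ^ p + 1 :=
        Nat.ceil_lt_add_one (by positivity)
      linarith
    have hmf : (⌈z * α ^ p⌉₊ : ℝ) * f ≤ (2 * z * α ^ p) * (c / α ^ (p + ε * c)) := by
      apply mul_le_mul hceil hfle hf0 (by positivity)
    have hrw : (2 * z * α ^ p) * (c / α ^ (p + ε * c)) = 2 * z * c * α ^ (-(ε * c)) := by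
      have : α ^ (-(ε * c)) = α ^ p / α ^ (p + ε * c) := by
        rw [← Real.rpow_sub hα0]
        congr 1
        ring
      rw [this]
      field_simp
    calc 1 - (1 - f) ^ ⌈z * α ^ p⌉₊ ≤ (⌈z * α ^ p⌉₊ : ℝ) * f := hstep1
      _ ≤ (2 * z * α ^ p) * (c / α ^ (p + ε * c)) := hmf
      _ = 2 * z * c * α ^ (-(ε * c)) := hrw
end
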